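/- If A is an n×n symmetric positive definite matrix and B is an m×n matrix of full row rank, then the saddle-point matrix M = [[A, Bᵀ],[B, 0]] is invertible but indefinite: there exist nonzero vectors x, y in ℝ^{n+m} with xᵀMx > 0 and yᵀMy < 0 (assuming m ≥ 1 and n ≥ 1). -/

import Mathlib

open Matrix

theorem saddle_point_invertible_indefinite (n m : ℕ) (hn : 1 ≤ n) (hm : 1 ≤ m)
    (A : Matrix (Fin n) (Fin n) ℝ) (B : Matrix (Fin m) (Fin n) ℝ)
    (hA : A.PosDef) (hrank : B.rank = m) :
    IsUnit (Matrix.fromBlocks A Bᵀ B (0 : Matrix (Fin m) (Fin m) ℝ)).det ∧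
    (∃ x : Fin n ⊕ Fin m → ℝ, x ≠ 0 ∧
      0 < x ⬝ᵥ (Matrix.fromBlocks A Bᵀ B (0 : Matrix (Fin m) (Fin m) ℝ)).mulVec x) ∧
    (∃ y : Fin n ⊕ Fin m → ℝ, y ≠ 0 ∧
      y ⬝ᵥ (Matrix.fromBlocks A Bᵀ B (0 : Matrix (Fin m) (Fin m) ℝ)).mulVec y < 0) := by
  set M : Matrix (Fin n ⊕ Fin m) (Fin n ⊕ Fin m) ℝ := Matrix.fromBlocks A Bᵀ B 0 with hM
  -- rows of B are linearly independent
  have hli : LinearIndependent ℝ (fun i ↦ B i) := by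
    rw [linearIndependent_iff_card_eq_finrank_span]
    rw [B.rank_eq_finrank_span_row] at hrank
    simp [Set.finrank, ← hrank]
    rfl
  have hBt : ∀ w : Fin m → ℝ, w ≠ 0 → Bᵀ *ᵥ w ≠ 0 := by
    intro w hw h0
    apply hw
    have hinj := Matrix.vecMul_injective_iff.mpr hli
    have : B.vecMul w = B.vecMul 0 := by
      rw [← Matrix.mulVec_transpose] at *
      simp [h0]
    exact hinj this
  have hAdet : IsUnit A.det := isUnit_iff_ne_zero.mpr (ne_of_gt hA.det_pos)
  have hAinv : A⁻¹.PosDef := hA.inv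
  -- positivity for A on nonzero vectors (real case)
  have hApos : ∀ v : Fin n → ℝ, v ≠ 0 → 0 < v ⬝ᵥ (A *ᵥ v) := by
    intro v hv
    have := hA.dotProduct_mulVec_pos hv
    simpa using this
  have hAinvpos : ∀ v : Fin n → ℝ, v ≠ 0 → 0 < v ⬝ᵥ (A⁻¹ *ᵥ v) := by
    intro v hv
    have := hAinv.dotProduct_mulVec_pos hv
    simpa using this
  refine ⟨?_, ?_, ?_⟩
  · -- invertibility: injectivity of mulVec
    rw [← Matrix.isUnit_iff_isUnit_det, ← Matrix.mulVec_injective_iff_isUnit]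
    have hker : ∀ z : Fin n ⊕ Fin m → ℝ, M *ᵥ z = 0 → z = 0 := by
      intro z hz
      set v : Fin n → ℝ := fun i => z (Sum.inl i) with hv
      set w : Fin m → ℝ := fun j => z (Sum.inr j) with hw
      have hzelim : z = Sum.elim v w := by
        funext s; cases s <;> rfl
      rw [hzelim, hM, Matrix.fromBlocks_mulVec] at hz
      have h1 : A *ᵥ v + Bᵀ *ᵥ w = 0 := by
        funext i; have := congrFun hz (Sum.inl i); simpa using this
      have h2 : B *ᵥ v = 0 := by
        funext j; have := congrFun hz (Sum.inr j); simpa using this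
      have hvz : v = 0 := by
        by_contra hvne
        have hq : 0 < v ⬝ᵥ (A *ᵥ v) := hApos v hvne
        have : v ⬝ᵥ (A *ᵥ v) + v ⬝ᵥ (Bᵀ *ᵥ w) = 0 := by
          rw [← dotProduct_add, h1, dotProduct_zero]
        have hcross : v ⬝ᵥ (Bᵀ *ᵥ w) = 0 := by
          rw [Matrix.dotProduct_mulVec, Matrix.vecMul_transpose, h2, zero_dotProduct]
        linarith
      have hwz : w = 0 := by
        by_contra hwne
        apply hBt w hwne
        rw [hvz] at h1
        simpa using h1
      rw [hzelim, hvz, hwz]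
      funext s; cases s <;> simp
    intro a b hab
    have : M *ᵥ (a - b) = 0 := by
      rw [Matrix.mulVec_sub, hab, sub_self]
    have := hker _ this
    have := sub_eq_zero.mp this
    exact this
  · -- positive direction
    refine ⟨Sum.elim (fun _ => (1 : ℝ)) 0, ?_, ?_⟩
    · intro h
      have := congrFun h (Sum.inl ⟨0, hn⟩)
      simpa using this
    · rw [hM, Matrix.fromBlocks_mulVec]
      have hv : (fun _ => (1 : ℝ)) ≠ (0 : Fin n → ℝ) := by
        intro h; have := congrFun h ⟨0, hn⟩; simpa using this
      have := hApos _ hv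
      simpa using this
  · -- negative direction
    set w : Fin m → ℝ := fun _ => 1 with hwdef
    have hwne : w ≠ 0 := by
      intro h; have := congrFun h ⟨0, hm⟩; simpa [hwdef] using this
    set u : Fin n → ℝ := Bᵀ *ᵥ w with hu
    have hune : u ≠ 0 := hBt w hwne
    set v : Fin n → ℝ := -(A⁻¹ *ᵥ u) with hvdef
    refine ⟨Sum.elim v w, ?_, ?_⟩
    · intro h
      have := congrFun h (Sum.inr ⟨0, hm⟩)
      simpa [hwdef] using this
    · rw [hM, Matrix.fromBlocks_mulVec]
      simp only [Sum.elim_comp_inl, Sum.elim_comp_inr]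
      have hAv : A *ᵥ v + Bᵀ *ᵥ w = 0 := by
        rw [hvdef, Matrix.mulVec_neg, Matrix.mulVec_mulVec, Matrix.mul_nonsing_inv A hAdet,
          Matrix.one_mulVec]
        simp [hu]
      have key : Sum.elim v w ⬝ᵥ Sum.elim (A *ᵥ v + Bᵀ *ᵥ w) (B *ᵥ v + 0 *ᵥ w) =
          v ⬝ᵥ (A *ᵥ v + Bᵀ *ᵥ w) + w ⬝ᵥ (B *ᵥ v + 0 *ᵥ w) := by
        simp [sumElim_dotProduct_sumElim]
      rw [key, hAv, dotProduct_zero, zero_add]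
      have : w ⬝ᵥ (B *ᵥ v + 0 *ᵥ w) = -(u ⬝ᵥ (A⁻¹ *ᵥ u)) := by
        rw [Matrix.zero_mulVec, add_zero, hvdef, Matrix.mulVec_neg, dotProduct_neg,
          Matrix.dotProduct_mulVec, ← Matrix.mulVec_transpose, ← hu]
      rw [this]
      have := hAinvpos u hune
      linarith
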